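/- arXiv:2603.09563 — 4 statements merged into one kernel-verified Lean document; each statement's English description precedes it below -/
import Mathlib

section
/- Let G be the chain (path graph) on n ≥ 3 vertices v1, ..., vn with edges {v_i, v_{i+1}} for 1 ≤ i ≤ n-1, let u = v1, and let G' be obtained from G by adding the edge {v1, v3}. Then the number of triples (x, y, S), with {x, y} an unordered pair of distinct vertices and S ⊆ V \ {x, y}, such that S separates x and y in exactly one of G and G', equals 2^(n-2) - 1. -/
/-- `S` separates `u` and `v` in `G`: every `u`–`v` walk contains a vertex of `S`
(with `S` disjoint from `{u, v}`, such a vertex is internal). -/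
def Separates {n : ℕ} (G : SimpleGraph (Fin n)) (u v : Fin n) (S : Finset (Fin n)) : Prop :=
  ∀ p : G.Walk u v, ∃ w ∈ p.support, w ∈ S

/-- The separation distance between two graphs on `Fin n`: the number of triples
`(x, y, S)` with `x < y` (so each unordered pair is counted once) and
`S ⊆ V \ {x, y}` on which the separation relations of the two graphs differ. -/
noncomputable def sepDist {n : ℕ} (G₁ G₂ : SimpleGraph (Fin n)) : ℕ :=
  Set.ncard {t : Fin n × Fin n × Finset (Fin n) |
    t.1 < t.2.1 ∧ t.1 ∉ t.2.2 ∧ t.2.1 ∉ t.2.2 ∧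
    ¬ (Separates G₁ t.1 t.2.1 t.2.2 ↔ Separates G₂ t.1 t.2.1 t.2.2)}

/-!
Vertex `i` of `Fin n` is `v_{i+1}`. Since `G ≤ G'`, a separator in `G'` separates in `G`, so the
triples counted are those separated in `G` but not in `G'`. No edge of the path graph jumps over a
vertex, so there `S` separates `x < y` iff it meets the open interval `(x, y)`; in `G'` only the
chord jumps, and only over `v₂`. Hence the triples are exactly `(v₁, y, S)` with `y ≥ v₃`,
`v₂ ∈ S` and every other vertex of `S` beyond `y` (the walk `v₁ v₃ v₄ … y` then avoids `S`).
Sending such a triple to `{y} ∪ (S \ {v₂})`, whose minimum is `y`, is a bijection onto the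
nonempty subsets of `{v₃, …, vₙ}`.
-/

open SimpleGraph Finset

namespace SimpleGraph

variable {α : Type*} [LinearOrder α]

def NoEdgeAcross (G : SimpleGraph α) (k : α) : Prop :=
  ∀ a b, G.Adj a b → a < k → b ≤ k

theorem Walk.mem_support_of_noEdgeAcross {G : SimpleGraph α} {k : α} (hk : G.NoEdgeAcross k)
    {x y : α} (p : G.Walk x y) (hxy : k ∈ Set.uIcc x y) : k ∈ p.support := by
  induction p with
  | nil => simp_all
  | @cons a b c hab q ih =>
    rw [support_cons, List.mem_cons]
    refine (eq_or_ne k a).imp id fun hka => ih ?_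
    have := hk a b hab
    have := hk b a hab.symm
    rw [Set.mem_uIcc] at hxy ⊢
    grind

theorem noEdgeAcross_pathGraph {n : ℕ} (k : Fin n) : (pathGraph n).NoEdgeAcross k := by
  intro a b hab hak
  rw [pathGraph_adj] at hab
  omega

theorem pathGraph_exists_walk_support_Icc {n : ℕ} {x y : Fin n} (hxy : x ≤ y) :
    ∃ p : (pathGraph n).Walk x y, ∀ w ∈ p.support, x ≤ w ∧ w ≤ y := by
  obtain ⟨m, hm⟩ := y
  rw [Fin.le_def] at hxy
  change x.val ≤ m at hxy
  induction m with
  | zero =>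
    obtain rfl : x = ⟨0, hm⟩ := Fin.ext (Nat.le_zero.mp hxy)
    exact ⟨.nil, by simp⟩
  | succ m ih =>
    rcases eq_or_lt_of_le hxy with hx | hx
    · obtain rfl : x = ⟨m + 1, hm⟩ := Fin.ext hx
      exact ⟨.nil, by simp⟩
    obtain ⟨p, hp⟩ := ih (by omega) (by omega)
    have hadj : (pathGraph n).Adj ⟨m, by omega⟩ ⟨m + 1, hm⟩ := by simp [pathGraph_adj]
    refine ⟨p.concat hadj, fun w hw => ?_⟩
    rw [Walk.support_concat, List.mem_append, List.mem_singleton] at hw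
    rcases hw with hw | rfl
    · have := hp w hw
      simp only [Fin.le_def] at this ⊢
      omega
    · exact ⟨Fin.le_def.mpr hxy, le_rfl⟩

end SimpleGraph

variable {n : ℕ}

theorem Separates.anti {G H : SimpleGraph (Fin n)} (hGH : G ≤ H) {x y : Fin n}
    {S : Finset (Fin n)} (h : Separates H x y S) : Separates G x y S := fun p => by
  obtain ⟨w, hw, hwS⟩ := h (p.mapLe hGH)
  exact ⟨w, by simpa using hw, hwS⟩

theorem separates_of_noEdgeAcross {G : SimpleGraph (Fin n)} {x y k : Fin n}
    {S : Finset (Fin n)} (hk : G.NoEdgeAcross k) (hkS : k ∈ S) (hxk : x ≤ k) (hky : k ≤ y) :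
    Separates G x y S := fun p =>
  ⟨k, p.mem_support_of_noEdgeAcross hk (Set.mem_uIcc_of_le hxk hky), hkS⟩

theorem separates_pathGraph_iff {x y : Fin n} {S : Finset (Fin n)} (hxy : x ≤ y) (hx : x ∉ S)
    (hy : y ∉ S) : Separates (pathGraph n) x y S ↔ ∃ k ∈ S, x < k ∧ k < y := by
  refine ⟨fun h => ?_, fun ⟨k, hkS, hxk, hky⟩ =>
    separates_of_noEdgeAcross (noEdgeAcross_pathGraph k) hkS hxk.le hky.le⟩
  obtain ⟨p, hp⟩ := pathGraph_exists_walk_support_Icc hxy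
  obtain ⟨w, hw, hwS⟩ := h p
  exact ⟨w, hwS, lt_of_le_of_ne (hp w hw).1 (by rintro rfl; exact hx hwS),
    lt_of_le_of_ne (hp w hw).2 (by rintro rfl; exact hy hwS)⟩

def pathGraphChord (h : 2 < n) : SimpleGraph (Fin n) :=
  pathGraph n ⊔ fromEdgeSet {s(⟨0, by omega⟩, ⟨2, h⟩)}

def chordTriples (h : 2 < n) : Set (Fin n × Fin n × Finset (Fin n)) :=
  {t | t.1.val = 0 ∧ 2 ≤ t.2.1.val ∧ ⟨1, by omega⟩ ∈ t.2.2 ∧ ∀ k ∈ t.2.2, k.val = 1 ∨ t.2.1 < k}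

def chordTripleToFinset (h : 2 < n) (t : Fin n × Fin n × Finset (Fin n)) : Finset (Fin n) :=
  insert t.2.1 (t.2.2.erase ⟨1, by omega⟩)

section Chord

variable (h : 2 < n)

theorem pathGraphChord_adj {a b : Fin n} : (pathGraphChord h).Adj a b ↔
    a.val + 1 = b.val ∨ b.val + 1 = a.val ∨ a.val = 0 ∧ b.val = 2 ∨ a.val = 2 ∧ b.val = 0 := by
  simp only [pathGraphChord, sup_adj, pathGraph_adj, fromEdgeSet_adj, Set.mem_singleton_iff,
    Sym2.eq_iff, Fin.ext_iff]
  omega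

theorem pathGraph_le_pathGraphChord : pathGraph n ≤ pathGraphChord h := le_sup_left

theorem noEdgeAcross_pathGraphChord {k : Fin n} (hk : k.val ≠ 1) :
    (pathGraphChord h).NoEdgeAcross k := by
  intro a b hab hak
  rw [pathGraphChord_adj] at hab
  omega

theorem not_separates_pathGraphChord {y : Fin n} {S : Finset (Fin n)} (hy : 2 ≤ y.val)
    (hS : ∀ k ∈ S, k.val = 1 ∨ y < k) : ¬ Separates (pathGraphChord h) ⟨0, by omega⟩ y S := by
  intro hsep
  have hchord : (pathGraphChord h).Adj ⟨0, by omega⟩ ⟨2, h⟩ := by simp [pathGraphChord_adj]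
  obtain ⟨q, hq⟩ := pathGraph_exists_walk_support_Icc (x := ⟨2, h⟩) (y := y) hy
  obtain ⟨w, hw, hwS⟩ := hsep (.cons hchord (q.mapLe (pathGraph_le_pathGraphChord h)))
  rw [Walk.support_cons, Walk.support_mapLe_eq_support, List.mem_cons] at hw
  have hw1 := hS w hwS
  rw [Fin.lt_def] at hw1
  rcases hw with rfl | hw
  · simp at hw1
  · have h2w : 2 ≤ w.val := (hq w hw).1
    have hwy := (hq w hw).2
    omega

theorem mem_chordTriples_iff {x y : Fin n} {S : Finset (Fin n)} :
    (x, y, S) ∈ chordTriples h ↔ x < y ∧ x ∉ S ∧ y ∉ S ∧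
      ¬(Separates (pathGraph n) x y S ↔ Separates (pathGraphChord h) x y S) := by
  simp only [chordTriples, Set.mem_ofPred_eq]
  constructor
  · rintro ⟨hx0, hy2, h1S, hS⟩
    rw [show x = ⟨0, by omega⟩ from Fin.ext hx0]
    have hxS : (⟨0, by omega⟩ : Fin n) ∉ S := fun hmem => by
      have := hS _ hmem; simp [Fin.lt_def] at this
    have hyS : y ∉ S := fun hmem => by have := hS y hmem; omega
    have hxy : (⟨0, by omega⟩ : Fin n) < y := Fin.lt_def.mpr (by simp; omega)
    refine ⟨hxy, hxS, hyS, fun hiff => not_separates_pathGraphChord h hy2 hS (hiff.mp ?_)⟩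
    exact (separates_pathGraph_iff hxy.le hxS hyS).mpr
      ⟨_, h1S, Fin.lt_def.mpr (by simp), Fin.lt_def.mpr (by simp; omega)⟩
  · rintro ⟨hxy, hx, hy, hdiff⟩
    have hanti : Separates (pathGraphChord h) x y S → Separates (pathGraph n) x y S :=
      Separates.anti (pathGraph_le_pathGraphChord h)
    have hchord {k : Fin n} (hkS : k ∈ S) (hk : k.val ≠ 1) (hxk : x ≤ k) (hky : k ≤ y) :
        Separates (pathGraphChord h) x y S :=
      separates_of_noEdgeAcross (noEdgeAcross_pathGraphChord h hk) hkS hxk hky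
    have hsep : Separates (pathGraph n) x y S := by tauto
    have hnsep : ¬ Separates (pathGraphChord h) x y S := by tauto
    obtain ⟨k, hkS, hxk, hky⟩ := (separates_pathGraph_iff hxy.le hx hy).mp hsep
    have hx0 : x.val = 0 := by
      by_contra hx0
      exact hnsep (hchord hkS (by omega) hxk.le hky.le)
    have hS : ∀ j ∈ S, j.val = 1 ∨ y < j := by
      intro j hjS
      by_contra! hj
      have hxj : x ≤ j := Fin.le_def.mpr (by omega)
      exact hnsep (hchord hjS hj.1 hxj hj.2)
    have hk1 : k.val = 1 := by have := hS k hkS; omega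
    rw [show k = ⟨1, by omega⟩ from Fin.ext hk1] at hkS
    exact ⟨hx0, by omega, hkS, hS⟩

theorem le_of_mem_chordTripleToFinset {t : Fin n × Fin n × Finset (Fin n)}
    (ht : t ∈ chordTriples h) {k : Fin n} (hk : k ∈ chordTripleToFinset h t) : t.2.1 ≤ k := by
  rcases mem_insert.mp hk with rfl | hk
  · exact le_rfl
  · obtain ⟨hk1, hkS⟩ := mem_erase.mp hk
    have := ht.2.2.2 k hkS
    rw [ne_eq, Fin.ext_iff] at hk1
    exact le_of_lt (this.resolve_left hk1)

theorem mapsTo_chordTripleToFinset :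
    Set.MapsTo (chordTripleToFinset h) (chordTriples h)
      ↑((Ici (⟨2, h⟩ : Fin n)).powerset.erase ∅) := by
  intro t ht
  refine mem_coe.mpr (mem_erase.mpr ⟨insert_ne_empty _ _, mem_powerset.mpr fun k hk => ?_⟩)
  have hyk := Fin.le_def.mp (le_of_mem_chordTripleToFinset h ht hk)
  have hy2 := ht.2.1
  exact mem_Ici.mpr (Fin.le_def.mpr (show 2 ≤ k.val by omega))

theorem insert_erase_chordTripleToFinset {t : Fin n × Fin n × Finset (Fin n)}
    (ht : t ∈ chordTriples h) :
    insert ⟨1, by omega⟩ ((chordTripleToFinset h t).erase t.2.1) = t.2.2 := by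
  have hy : t.2.1 ∉ t.2.2.erase ⟨1, by omega⟩ := fun hmem => by
    obtain ⟨hy1, hyS⟩ := mem_erase.mp hmem
    rw [ne_eq, Fin.ext_iff] at hy1
    exact lt_irrefl _ ((ht.2.2.2 _ hyS).resolve_left hy1)
  rw [chordTripleToFinset, erase_insert hy, insert_erase ht.2.2.1]

theorem injOn_chordTripleToFinset : Set.InjOn (chordTripleToFinset h) (chordTriples h) := by
  intro t ht t' ht' himage
  have hy : t.2.1 = t'.2.1 := le_antisymm
    (le_of_mem_chordTripleToFinset h ht (himage ▸ mem_insert_self _ _))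
    (le_of_mem_chordTripleToFinset h ht' (himage.symm ▸ mem_insert_self _ _))
  have hS : t.2.2 = t'.2.2 := by
    rw [← insert_erase_chordTripleToFinset h ht, ← insert_erase_chordTripleToFinset h ht',
      himage, hy]
  exact Prod.ext (Fin.ext (ht.1.trans ht'.1.symm)) (Prod.ext hy hS)

theorem surjOn_chordTripleToFinset :
    Set.SurjOn (chordTripleToFinset h) (chordTriples h)
      ↑((Ici (⟨2, h⟩ : Fin n)).powerset.erase ∅) := by
  intro T hT
  obtain ⟨hTne, hT2⟩ := mem_erase.mp (mem_coe.mp hT)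
  rw [mem_powerset] at hT2
  have hTne : T.Nonempty := nonempty_iff_ne_empty.mpr hTne
  set y := T.min' hTne
  have hyT : y ∈ T := min'_mem T hTne
  have h1T : (⟨1, by omega⟩ : Fin n) ∉ T.erase y := fun hmem => by
    simpa [Fin.le_def] using hT2 (mem_of_mem_erase hmem)
  refine ⟨(⟨0, by omega⟩, y, insert ⟨1, by omega⟩ (T.erase y)),
    ⟨rfl, ?_, mem_insert_self _ _, ?_⟩, ?_⟩
  · simpa [Fin.le_def] using hT2 hyT
  · intro k hk
    rcases mem_insert.mp hk with rfl | hk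
    · exact Or.inl rfl
    · obtain ⟨hky, hkT⟩ := mem_erase.mp hk
      exact Or.inr (lt_of_le_of_ne (min'_le T k hkT) (Ne.symm hky))
  · simp only [chordTripleToFinset, erase_insert h1T, insert_erase hyT]

theorem ncard_chordTriples : (chordTriples h).ncard = 2 ^ (n - 2) - 1 := by
  rw [Set.BijOn.ncard_eq ⟨mapsTo_chordTripleToFinset h, injOn_chordTripleToFinset h,
    surjOn_chordTripleToFinset h⟩, Set.ncard_coe_finset, card_erase_of_mem (empty_mem_powerset _),
    card_powerset, Fin.card_Ici]

end Chord

theorem chain_add_edge_sepDist {n : ℕ} (hn : 3 ≤ n)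
    (G G' : SimpleGraph (Fin n)) (hG : G = SimpleGraph.pathGraph n)
    (hG' : G' = G ⊔ SimpleGraph.fromEdgeSet {s((⟨0, by omega⟩ : Fin n), ⟨2, by omega⟩)}) :
    sepDist G G' = 2 ^ (n - 2) - 1 := by
  subst hG hG'
  rw [← ncard_chordTriples hn]
  unfold sepDist
  congr 1
  ext ⟨x, y, S⟩
  exact (mem_chordTriples_iff hn).symm
end

section
/- Let D be a DAG whose skeleton is a path on vertices v1, ..., vn (in path order), and let C be the set of colliders of D. For 1 ≤ i < j ≤ n, let S_{i,j} = {v_k : i < k < j} and C_{i,j} = C ∩ S_{i,j}. Then for any Z ⊆ V \ {v_i, v_j}, the vertices v_i and v_j are d-connected given Z in D if and only if Z ∩ S_{i,j} = C_{i,j}. -/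
/-- A directed graph on `Fin n` is a binary relation; it is a DAG when it has no
directed cycle. -/
def IsDAG {n : ℕ} (D : Fin n → Fin n → Prop) : Prop :=
  ∀ v, ¬ Relation.TransGen D v v

/-- The skeleton (underlying undirected graph) of a directed graph. -/
def Skel {n : ℕ} (D : Fin n → Fin n → Prop) : SimpleGraph (Fin n) where
  Adj a b := a ≠ b ∧ (D a b ∨ D b a)
  symm := ⟨fun a b h => ⟨h.1.symm, h.2.symm⟩⟩
  loopless := ⟨fun a h => h.1 rfl⟩

/-- `y` is a descendant of `x` (including `x` itself). -/
def Desc {n : ℕ} (D : Fin n → Fin n → Prop) (x y : Fin n) : Prop :=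
  Relation.ReflTransGen D x y

/-- A path (in the skeleton) from `u` to `v`, as a list of distinct vertices with
consecutive vertices adjacent in the skeleton. -/
def IsSkelPath {n : ℕ} (D : Fin n → Fin n → Prop) (u v : Fin n) (p : List (Fin n)) : Prop :=
  p.Nodup ∧ p.head? = some u ∧ p.getLast? = some v ∧
    p.Chain' (fun a b => D a b ∨ D b a)

/-- Position `i` of the list `p` is a collider: both neighboring arcs point into it. -/
def ColliderAt {n : ℕ} [NeZero n] (D : Fin n → Fin n → Prop) (p : List (Fin n)) (i : ℕ) : Prop :=
  D (p.getD (i - 1) default) (p.getD i default) ∧ D (p.getD (i + 1) default) (p.getD i default)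

/-- The path `p` is blocked by `Z`: some internal position is a non-collider in `Z`,
or a collider none of whose descendants (including itself) lies in `Z`. -/
def Blocked {n : ℕ} [NeZero n] (D : Fin n → Fin n → Prop) (Z : Finset (Fin n))
    (p : List (Fin n)) : Prop :=
  ∃ i : ℕ, 0 < i ∧ i + 1 < p.length ∧
    ((¬ ColliderAt D p i ∧ p.getD i default ∈ Z) ∨
      (ColliderAt D p i ∧ ∀ w, Desc D (p.getD i default) w → w ∉ Z))

/-- `u` and `v` are d-separated given `Z` in `D`. -/
def DSep {n : ℕ} [NeZero n] (D : Fin n → Fin n → Prop) (u v : Fin n)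
    (Z : Finset (Fin n)) : Prop :=
  ∀ p : List (Fin n), IsSkelPath D u v p → Blocked D Z p

/-- The d-separation distance between two directed graphs on `Fin n`: the number of
triples `(u, v, Z)` with `u < v` and `Z ⊆ V \ {u, v}` on which their d-separation
relations differ. -/
noncomputable def dSepDist {n : ℕ} [NeZero n] (D₁ D₂ : Fin n → Fin n → Prop) : ℕ :=
  Set.ncard {t : Fin n × Fin n × Finset (Fin n) |
    t.1 < t.2.1 ∧ t.1 ∉ t.2.2 ∧ t.2.1 ∉ t.2.2 ∧
    ¬ (DSep D₁ t.1 t.2.1 t.2.2 ↔ DSep D₂ t.1 t.2.1 t.2.2)}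

/-- A vertex is a collider (of a DAG with a path skeleton) if it has two distinct
parents. -/
def IsColliderVertex {n : ℕ} (D : Fin n → Fin n → Prop) (k : Fin n) : Prop :=
  ∃ a b, a ≠ b ∧ D a k ∧ D b k

/-- Two directed graphs entail the same d-separation relations. -/
def MarkovEquiv {n : ℕ} [NeZero n] (D₁ D₂ : Fin n → Fin n → Prop) : Prop :=
  ∀ (u v : Fin n) (Z : Finset (Fin n)), u ≠ v → u ∉ Z → v ∉ Z →
    (DSep D₁ u v Z ↔ DSep D₂ u v Z)

/-!
In a DAG whose skeleton is the path `0 — 1 — ⋯ — n-1`, a duplicate-free walk in the skeleton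
cannot turn back, so the only skeleton path from `i` to `j` is `i, i+1, …, j`. Both skeleton
neighbours of a collider are its parents, so a collider has no children and is its own only
descendant. Hence that single path is open given `Z` exactly when each of its inner vertices
lies in `Z` if and only if it is a collider.
-/

open SimpleGraph

namespace List

theorem eq_range'_of_isChain_succ :
    ∀ {l : List ℕ} {a : ℕ}, l.IsChain (fun x y => x + 1 = y) → l.head? = some a →
      l = range' a l.length
  | [], _, _, h => by simp at h
  | [_], _, _, h => by simp_all
  | x :: y :: l, a, hc, h => by
    obtain rfl : x = a := by simpa using h
    obtain ⟨rfl, hc⟩ := isChain_cons_cons.1 hc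
    rw [eq_range'_of_isChain_succ hc rfl]
    simp [range'_succ]

theorem Nodup.isChain_succ_or_isChain_pred :
    ∀ {l : List ℕ}, l.Nodup → l.IsChain (fun x y => x + 1 = y ∨ y + 1 = x) →
      l.IsChain (fun x y => x + 1 = y) ∨ l.IsChain (fun x y => y + 1 = x)
  | [], _, _ | [_], _, _ => by simp
  | [x, y], _, hc => by simpa using hc
  | x :: y :: z :: l, hnd, hc => by
    have hxz : x ≠ z := by rintro rfl; simp at hnd
    obtain ⟨hxy, hc⟩ := isChain_cons_cons.1 hc
    rcases hnd.of_cons.isChain_succ_or_isChain_pred hc with hup | hdown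
    · exact .inl (hup.cons_cons (by have := (isChain_cons_cons.1 hup).1; omega))
    · exact .inr (hdown.cons_cons (by have := (isChain_cons_cons.1 hdown).1; omega))

theorem nodup_isChain_iff_eq_range' {l : List ℕ} {a b : ℕ} (hab : a < b) :
    (l.Nodup ∧ l.head? = some a ∧ l.getLast? = some b ∧
        l.IsChain (fun x y => x + 1 = y ∨ y + 1 = x)) ↔
      l = range' a (b + 1 - a) := by
  constructor
  · rintro ⟨hnd, ha, hb, hc⟩
    have hne : l.length ≠ 0 := by rintro h; simp [length_eq_zero_iff.1 h] at ha
    rcases hnd.isChain_succ_or_isChain_pred hc with hup | hdown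
    · have hl := eq_range'_of_isChain_succ hup ha
      rw [hl, getLast?_range', if_neg hne, Option.some.injEq] at hb
      rw [hl]
      congr 1
      omega
    · have hrev := eq_range'_of_isChain_succ (isChain_reverse.2 hdown) (by simpa using hb)
      have := congrArg getLast? hrev
      rw [getLast?_reverse, ha, getLast?_range', length_reverse, if_neg hne,
        Option.some.injEq] at this
      omega
  · rintro rfl
    refine ⟨nodup_range', ?_, ?_, (isChain_range' a _ 1).imp fun x y h => .inl h.symm⟩
    · rw [head?_range', if_neg (by omega)]
    · rw [getLast?_range', if_neg (by omega)]
      congr 1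
      omega

end List

theorem Fin.exists_map_val_eq_range' {n : ℕ} (i j : Fin n) :
    ∃ p : List (Fin n), p.map Fin.val = List.range' i (j + 1 - i) :=
  CanLift.prf _ fun x hx => by simp at hx; omega

namespace IsDAG

variable {n : ℕ} {D : Fin n → Fin n → Prop}

theorem irrefl (hD : IsDAG D) (a : Fin n) : ¬ D a a := fun h => hD a (.single h)

theorem asymm (hD : IsDAG D) {a b : Fin n} (hab : D a b) : ¬ D b a :=
  fun hba => hD a (.head hab (.single hba))

theorem arc_or_arc_iff (hD : IsDAG D) (hskel : Skel D = pathGraph n) {a b : Fin n} :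
    D a b ∨ D b a ↔ (a : ℕ) + 1 = b ∨ (b : ℕ) + 1 = a := by
  rw [← pathGraph_adj, ← hskel]
  exact ⟨fun h => ⟨by rintro rfl; exact h.elim (hD.irrefl a) (hD.irrefl a), h⟩, And.right⟩

theorem isColliderVertex_iff (hD : IsDAG D) (hskel : Skel D = pathGraph n) {a k b : Fin n}
    (ha : (a : ℕ) + 1 = k) (hb : (k : ℕ) + 1 = b) :
    IsColliderVertex D k ↔ D a k ∧ D b k := by
  refine ⟨?_, fun h => ⟨a, b, by rintro rfl; omega, h⟩⟩
  rintro ⟨a', b', hne, ha', hb'⟩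
  have := (hD.arc_or_arc_iff hskel).1 (.inl ha')
  have := (hD.arc_or_arc_iff hskel).1 (.inl hb')
  obtain ⟨rfl, rfl⟩ | ⟨rfl, rfl⟩ : (a' = a ∧ b' = b) ∨ (a' = b ∧ b' = a) := by
    simp only [Fin.ext_iff] at hne ⊢
    omega
  exacts [⟨ha', hb'⟩, ⟨hb', ha'⟩]

theorem not_arc_of_isColliderVertex (hD : IsDAG D) (hskel : Skel D = pathGraph n) {k : Fin n}
    (hk : IsColliderVertex D k) (c : Fin n) : ¬ D k c := by
  obtain ⟨a, b, hne, ha, hb⟩ := hk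
  intro hc
  have := (hD.arc_or_arc_iff hskel).1 (.inl ha)
  have := (hD.arc_or_arc_iff hskel).1 (.inl hb)
  have := (hD.arc_or_arc_iff hskel).1 (.inl hc)
  obtain rfl | rfl : c = a ∨ c = b := by
    simp only [Fin.ext_iff] at hne ⊢
    omega
  exacts [hD.asymm ha hc, hD.asymm hb hc]

theorem desc_iff_of_isColliderVertex (hD : IsDAG D) (hskel : Skel D = pathGraph n)
    {k w : Fin n} (hk : IsColliderVertex D k) : Desc D k w ↔ w = k := by
  refine ⟨fun h => ?_, by rintro rfl; exact .refl⟩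
  obtain h | ⟨c, hc, -⟩ := h.cases_head
  exacts [h.symm, (hD.not_arc_of_isColliderVertex hskel hk c hc).elim]

theorem blocks_iff (hD : IsDAG D) (hskel : Skel D = pathGraph n) {k : Fin n}
    {Z : Finset (Fin n)} :
    (¬ IsColliderVertex D k ∧ k ∈ Z) ∨ (IsColliderVertex D k ∧ ∀ w, Desc D k w → w ∉ Z) ↔
      ¬ (k ∈ Z ↔ IsColliderVertex D k) := by
  by_cases hk : IsColliderVertex D k
  · simp [hk, hD.desc_iff_of_isColliderVertex hskel hk]
  · simp [hk]

theorem isSkelPath_iff (hD : IsDAG D) (hskel : Skel D = pathGraph n) {i j : Fin n} (hij : i < j)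
    {p : List (Fin n)} : IsSkelPath D i j p ↔ p.map Fin.val = List.range' i (j + 1 - i) := by
  have hval {o : Option (Fin n)} {a : Fin n} : o.map Fin.val = some ↑a ↔ o = some a :=
    (Option.map_injective Fin.val_injective).eq_iff (b := some a)
  rw [← List.nodup_isChain_iff_eq_range' hij, List.nodup_map_iff Fin.val_injective]
  -- `IsSkelPath` is phrased with the deprecated `List.Chain'`, a synonym of `List.IsChain`.
  show _ ∧ _ ∧ _ ∧ p.IsChain _ ↔ _
  simp only [List.isChain_map, List.head?_map, List.getLast?_map, hval,
    ← hD.arc_or_arc_iff hskel]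

theorem blocked_iff [NeZero n] (hD : IsDAG D) (hskel : Skel D = pathGraph n) {i j : Fin n}
    {p : List (Fin n)} (hp : p.map Fin.val = List.range' i (j + 1 - i)) (Z : Finset (Fin n)) :
    Blocked D Z p ↔ ∃ k, i < k ∧ k < j ∧ ¬ (k ∈ Z ↔ IsColliderVertex D k) := by
  have hlen : p.length = j + 1 - i := by simpa using congrArg List.length hp
  have hval (m : ℕ) (hm : m < p.length) : (p.getD m default : ℕ) = i + m := by
    have h := List.getElem_map (f := Fin.val) (l := p) (i := m) (h := by simpa using hm)
    simp only [hp, List.getElem_range'] at h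
    rw [List.getD_eq_getElem _ _ hm, ← h]
    omega
  have hcoll (m : ℕ) (h0 : 0 < m) (h1 : m + 1 < p.length) :
      ColliderAt D p m ↔ IsColliderVertex D (p.getD m default) :=
    (hD.isColliderVertex_iff hskel (by rw [hval _ (by omega), hval _ (by omega)]; omega)
      (by rw [hval _ (by omega), hval _ h1]; omega)).symm
  constructor
  · rintro ⟨m, h0, h1, hm⟩
    rw [hcoll m h0 h1, blocks_iff hD hskel] at hm
    refine ⟨_, ?_, ?_, hm⟩ <;> rw [Fin.lt_def, hval m (by omega)] <;> omega
  · rintro ⟨k, hik, hkj, hk⟩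
    rw [Fin.lt_def] at hik hkj
    have hm : p.getD (k - i) default = k := Fin.ext (by rw [hval _ (by omega)]; omega)
    refine ⟨k - i, by omega, by omega, ?_⟩
    rw [hcoll _ (by omega) (by omega), blocks_iff hD hskel, hm]
    exact hk

end IsDAG

theorem path_dconnection_characterization_general {n : ℕ} [NeZero n]
    (D : Fin n → Fin n → Prop) (hD : IsDAG D)
    (hskel : Skel D = SimpleGraph.pathGraph n)
    (i j : Fin n) (hij : i < j) (Z : Finset (Fin n)) :
    ¬ DSep D i j Z ↔
      ∀ k : Fin n, i < k → k < j → (k ∈ Z ↔ IsColliderVertex D k) := by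
  obtain ⟨p, hp⟩ := Fin.exists_map_val_eq_range' i j
  have hpaths (q : List (Fin n)) : IsSkelPath D i j q ↔ q = p := by
    rw [hD.isSkelPath_iff hskel hij, ← hp, (List.map_injective_iff.2 Fin.val_injective).eq_iff]
  have hsep : DSep D i j Z ↔ Blocked D Z p := by simp [DSep, hpaths]
  rw [hsep, hD.blocked_iff hskel hp]
  push Not
  rfl

theorem path_dconnection_characterization {n : ℕ} [NeZero n]
    (D : Fin n → Fin n → Prop) (hD : IsDAG D)
    (hskel : Skel D = SimpleGraph.pathGraph n)
    (i j : Fin n) (hij : i < j) (Z : Finset (Fin n)) (hiZ : i ∉ Z) (hjZ : j ∉ Z) :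
    ¬ DSep D i j Z ↔
      ∀ k : Fin n, i < k → k < j → (k ∈ Z ↔ IsColliderVertex D k) :=
  path_dconnection_characterization_general D hD hskel i j hij Z
end

section
/- Let n ≥ 4. Let D1 be the DAG on v1, ..., vn with arcs (v1, v3), (v2, v3), and (v_i, v_{i+1}) for 3 ≤ i ≤ n-1, and let D' be the DAG obtained from D1 by adding the arc (v1, v2). Then the d-separation distance between D1 and D' is exactly 1: the only triple on which they differ is (v1, v2, ∅), where v1 and v2 are d-separated by ∅ in D1 but not in D'. -/
/-!
A path is blocked iff one of its windows of three consecutive vertices is. Every skeleton path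
of `D₁` has its internal vertices among `v₃, …, vₙ`, where `D₁` and `D'` have the same parents
and the same descendants, so it is blocked in `D₁` iff it is blocked in `D'`. A `D'`-path that
is not a `D₁`-path uses the arc `v₁ → v₂`; as `v₃` is the only other neighbour of `v₁` and of
`v₂`, this arc is its first or last edge, and unless the path joins `v₁` to `v₂`, bypassing the
arc through `v₃` gives a `D₁`-path each of whose blocking windows yields one of the original
path (both `v₁` and `v₂` are parents of `v₃`). For the pair `{v₁, v₂}` itself, the only
`D₁`-path is the collider `v₁ → v₃ ← v₂`, and every other vertex descends from `v₃`, so it is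
blocked by `Z` iff `Z = ∅`; in `D'` the two vertices are adjacent.
-/

section Paths

variable {n : ℕ} {D D' : Fin n → Fin n → Prop} {u v : Fin n} {p : List (Fin n)}

theorem IsSkelPath.reverse (hp : IsSkelPath D u v p) : IsSkelPath D v u p.reverse :=
  ⟨List.nodup_reverse.2 hp.1, by rw [List.head?_reverse]; exact hp.2.2.1,
    by rw [List.getLast?_reverse]; exact hp.2.1,
    List.isChain_reverse.2 (hp.2.2.2.imp fun _ _ h => h.symm)⟩

theorem IsSkelPath.mono (hD : ∀ a b, D a b → D' a b) (hp : IsSkelPath D u v p) :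
    IsSkelPath D' u v p :=
  ⟨hp.1, hp.2.1, hp.2.2.1, hp.2.2.2.imp fun a b => Or.imp (hD a b) (hD b a)⟩

variable [NeZero n] {Z : Finset (Fin n)}

theorem blocked_triple_iff {x y z : Fin n} :
    Blocked D Z [x, y, z] ↔
      (¬ (D x y ∧ D z y) ∧ y ∈ Z) ∨ ((D x y ∧ D z y) ∧ ∀ w, Desc D y w → w ∉ Z) := by
  refine ⟨fun ⟨i, h0, h1, h⟩ => ?_, fun h => ⟨1, one_pos, by simp, h⟩⟩
  obtain rfl : i = 1 := by simp only [List.length_cons, List.length_nil] at h1; omega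
  exact h

theorem not_blocked_of_length_lt (h : p.length < 3) : ¬ Blocked D Z p := by
  rintro ⟨i, h0, h1, -⟩
  omega

theorem blocked_cons_iff {x y z : Fin n} {t : List (Fin n)} :
    Blocked D Z (x :: y :: z :: t) ↔ Blocked D Z [x, y, z] ∨ Blocked D Z (y :: z :: t) := by
  constructor
  · rintro ⟨_ | _ | k, h0, h1, h⟩
    · omega
    · exact Or.inl ⟨1, one_pos, by simp, h⟩
    · exact Or.inr ⟨k + 1, k.succ_pos, by simpa using h1, h⟩
  · rintro (⟨i, h0, h1, h⟩ | ⟨i, h0, h1, h⟩)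
    · obtain rfl : i = 1 := by simp only [List.length_cons, List.length_nil] at h1; omega
      exact ⟨1, one_pos, by simp, h⟩
    · obtain ⟨k, rfl⟩ : ∃ k, i = k + 1 := ⟨i - 1, by omega⟩
      exact ⟨k + 2, by omega, by simpa using h1, h⟩

theorem blocked_iff_exists_infix {p : List (Fin n)} :
    Blocked D Z p ↔ ∃ x y z, [x, y, z] <:+: p ∧ Blocked D Z [x, y, z] := by
  match p with
  | x :: y :: z :: t =>
    rw [blocked_cons_iff, blocked_iff_exists_infix (p := y :: z :: t)]
    simp only [List.infix_cons_iff, List.cons_prefix_cons, List.nil_prefix, and_true]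
    constructor
    · rintro (h | ⟨a, b, c, habc, h⟩)
      · exact ⟨x, y, z, Or.inl ⟨rfl, rfl, rfl⟩, h⟩
      · exact ⟨a, b, c, Or.inr habc, h⟩
    · rintro ⟨a, b, c, ⟨rfl, rfl, rfl⟩ | habc, h⟩
      · exact Or.inl h
      · exact Or.inr ⟨a, b, c, habc, h⟩
  | [] | [_] | [_, _] =>
    refine iff_of_false (not_blocked_of_length_lt (by simp)) ?_
    rintro ⟨_, _, _, h, -⟩
    exact absurd h.length_le (by simp)

theorem Blocked.reverse (h : Blocked D Z p) : Blocked D Z p.reverse := by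
  obtain ⟨x, y, z, hxyz, hb⟩ := blocked_iff_exists_infix.1 h
  refine blocked_iff_exists_infix.2 ⟨z, y, x, List.reverse_infix.2 hxyz, ?_⟩
  rw [blocked_triple_iff] at hb ⊢
  rwa [and_comm (a := D z y)]

theorem DSep.symm (h : DSep D u v Z) : DSep D v u Z :=
  fun p hp => by simpa using (h _ hp.reverse).reverse

theorem blocked_congr
    (h : ∀ x y z, [x, y, z] <:+: p → (∀ a, D a y ↔ D' a y) ∧ ∀ w, Desc D y w ↔ Desc D' y w) :
    Blocked D Z p ↔ Blocked D' Z p := by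
  rw [blocked_iff_exists_infix, blocked_iff_exists_infix]
  refine exists_congr fun x => exists_congr fun y => exists_congr fun z =>
    and_congr_right fun hxyz => ?_
  obtain ⟨hpar, hdesc⟩ := h x y z hxyz
  simp only [blocked_triple_iff, hpar, hdesc]

theorem Blocked.cons_cons_of_cons {a b c : Fin n} {t : List (Fin n)} (hab : D a c ↔ D b c)
    (h : Blocked D Z (a :: c :: t)) : Blocked D Z (a :: b :: c :: t) := by
  rcases t with _ | ⟨d, t⟩
  · exact absurd h (not_blocked_of_length_lt (by simp))
  rw [blocked_cons_iff, blocked_triple_iff, hab, ← blocked_triple_iff] at h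
  exact blocked_cons_iff.2 (Or.inr (blocked_cons_iff.2 h))

end Paths

/-- The paper's `D₁`, with `vᵢ` encoded as `i - 1 : Fin n`; `shieldedVChain n` is `D'`. -/
def vChain (n : ℕ) (a b : Fin n) : Prop :=
  (a.1 = 0 ∧ b.1 = 2) ∨ (a.1 = 1 ∧ b.1 = 2) ∨ (2 ≤ a.1 ∧ a.1 + 1 = b.1)

def shieldedVChain (n : ℕ) (a b : Fin n) : Prop :=
  vChain n a b ∨ (a.1 = 0 ∧ b.1 = 1)

section VChain

variable {n : ℕ} {a b c x w : Fin n}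

theorem two_le_of_vChain (h : vChain n a b) : 2 ≤ b.1 := by
  unfold vChain at h
  omega

theorem eq_two_of_vChain_adj (h : vChain n a b ∨ vChain n b a) (ha : a.1 ≤ 1) : b.1 = 2 := by
  unfold vChain at h
  omega

theorem vChain_of_shieldedVChain (h : shieldedVChain n a b) (h2 : 2 ≤ a.1 ∨ 2 ≤ b.1) :
    vChain n a b := by
  unfold shieldedVChain vChain at *
  omega

theorem desc_shieldedVChain_iff (hx : 2 ≤ x.1) :
    Desc (shieldedVChain n) x w ↔ Desc (vChain n) x w := by
  refine ⟨fun h => ?_, Relation.ReflTransGen.mono (fun _ _ => Or.inl) _ _⟩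
  suffices Desc (vChain n) x w ∧ 2 ≤ w.1 from this.1
  induction h with
  | refl => exact ⟨.refl, hx⟩
  | tail _ hbc ih =>
    have hbc := vChain_of_shieldedVChain hbc (Or.inl ih.2)
    exact ⟨ih.1.tail hbc, two_le_of_vChain hbc⟩

theorem desc_vChain_of_le (hx : 2 ≤ x.1) (hxw : x.1 ≤ w.1) : Desc (vChain n) x w := by
  obtain ⟨k, hk⟩ := Nat.exists_eq_add_of_le hxw
  induction k generalizing w with
  | zero => exact (Fin.ext hk).symm ▸ .refl
  | succ k ih =>
    have hb : x.1 + k < n := by omega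
    refine Relation.ReflTransGen.tail (b := ⟨x.1 + k, hb⟩) (ih (by simp) rfl) ?_
    simp only [vChain]
    omega

-- Here and below, `a.1 + b.1 = 1` encodes `{a, b} = {v₁, v₂}`.
theorem two_le_of_ne (hab : a.1 + b.1 = 1) (hxa : x ≠ a) (hxb : x ≠ b) : 2 ≤ x.1 := by
  have := Fin.val_ne_of_ne hxa
  have := Fin.val_ne_of_ne hxb
  omega

theorem eq_two_of_shieldedVChain_adj (hab : a.1 + b.1 = 1)
    (hbc : shieldedVChain n b c ∨ shieldedVChain n c b) (hca : c ≠ a) : c.1 = 2 := by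
  have := Fin.val_ne_of_ne hca
  unfold shieldedVChain vChain at hbc
  omega

end VChain

section VChainPaths

variable {n : ℕ} {u v : Fin n} {p : List (Fin n)}

theorem IsSkelPath.two_le_of_infix (hp : IsSkelPath (vChain n) u v p) {x y z : Fin n}
    (h : [x, y, z] <:+: p) : 2 ≤ y.1 := by
  have hnd : [x, y, z].Nodup := hp.1.sublist h.sublist
  have hc : [x, y, z].IsChain (fun a b => vChain n a b ∨ vChain n b a) := hp.2.2.2.infix h
  simp only [List.isChain_cons_cons, List.IsChain.singleton, and_true] at hc
  by_contra hy
  have hxz : x = z := Fin.ext <| by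
    rw [eq_two_of_vChain_adj hc.1.symm (by omega), eq_two_of_vChain_adj hc.2 (by omega)]
  simp [hxz] at hnd

theorem IsSkelPath.eq_cons_cons_of_not_isChain (hp : IsSkelPath (shieldedVChain n) u v p)
    (hv : 2 ≤ v.1) (hchain : ¬ p.IsChain fun a b => vChain n a b ∨ vChain n b a) :
    ∃ b c t, p = u :: b :: c :: t ∧ u.1 + b.1 = 1 ∧ c.1 = 2 := by
  obtain ⟨a, b, l₁, l₂, rfl, hab⟩ : ∃ a b l₁ l₂,
      p = l₁ ++ a :: b :: l₂ ∧ ¬ (vChain n a b ∨ vChain n b a) := by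
    simpa [List.isChain_iff_forall_rel_of_append_cons_cons] using hchain
  have hab1 : a.1 + b.1 = 1 := by
    have := (List.isChain_append_cons_cons.1 hp.2.2.2).2.1
    unfold shieldedVChain at this
    unfold vChain at this hab
    omega
  obtain ⟨c, l₂, rfl⟩ : ∃ c l, l₂ = c :: l := by
    rcases l₂ with _ | ⟨c, l⟩
    · have : b = v := by simpa using hp.2.2.1
      omega
    · exact ⟨c, l, rfl⟩
  have window : ∀ l, l <:+: l₁ ++ a :: b :: c :: l₂ →
      l.Nodup ∧ l.IsChain fun x y => shieldedVChain n x y ∨ shieldedVChain n y x :=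
    fun l h => ⟨hp.1.sublist h.sublist, hp.2.2.2.infix h⟩
  have hc : c.1 = 2 := by
    obtain ⟨hnd, hch⟩ := window [a, b, c] ⟨l₁, l₂, by simp⟩
    refine eq_two_of_shieldedVChain_adj hab1
      (List.isChain_cons_cons.1 (List.isChain_cons_cons.1 hch).2).1 ?_
    rintro rfl
    simp at hnd
  -- The arc `v₁ → v₂` cannot be interior: its two outer neighbours on the path would both be `v₃`.
  obtain rfl | ⟨l₁, w, rfl⟩ := l₁.eq_nil_or_concat'
  · obtain rfl : a = u := by simpa using hp.2.1
    exact ⟨b, c, l₂, rfl, hab1, hc⟩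
  · obtain ⟨hnd, hch⟩ := window [w, a, b, c] ⟨l₁, l₂, by simp⟩
    have hw := eq_two_of_shieldedVChain_adj (b := a) (a := b) (by omega)
      (List.isChain_cons_cons.1 hch).1.symm (by rintro rfl; simp at hnd)
    obtain rfl : w = c := Fin.ext (hw.trans hc.symm)
    simp at hnd

theorem IsSkelPath.vChain_of_cons_cons {b c : Fin n} {t : List (Fin n)}
    (hp : IsSkelPath (shieldedVChain n) u v (u :: b :: c :: t)) (hub : u.1 + b.1 = 1)
    (hc : c.1 = 2) : IsSkelPath (vChain n) u v (u :: c :: t) := by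
  have hnd := hp.1
  refine ⟨hnd.sublist ((List.sublist_cons_self b _).cons_cons u), rfl,
    by simpa using hp.2.2.1, ?_⟩
  have hchain := (List.isChain_cons_cons.1 (List.isChain_cons_cons.1 hp.2.2.2).2).2
  have hu : u ∉ c :: t := fun h => (List.nodup_cons.1 hnd).1 (List.mem_cons_of_mem b h)
  have hb : b ∉ c :: t := (List.nodup_cons.1 (List.nodup_cons.1 hnd).2).1
  have hrest : ∀ x ∈ c :: t, 2 ≤ x.1 := fun x hx =>
    two_le_of_ne hub (fun h => hu (h ▸ hx)) (fun h => hb (h ▸ hx))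
  refine List.isChain_cons_cons.2 ⟨by unfold vChain; omega, hchain.imp_of_mem_imp ?_⟩
  exact fun x y hx hy => Or.imp (vChain_of_shieldedVChain · (Or.inl (hrest x hx)))
    (vChain_of_shieldedVChain · (Or.inl (hrest y hy)))

theorem IsSkelPath.exists_eq_cons_cons (hp : IsSkelPath (vChain n) u v p) (hu : u.1 ≤ 1)
    (huv : u ≠ v) : ∃ c t, p = u :: c :: t ∧ c.1 = 2 := by
  obtain ⟨-, hhead, hlast, hchain⟩ := hp
  rcases p with _ | ⟨a, _ | ⟨c, t⟩⟩
  · simp at hhead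
  · simp only [List.head?_cons, List.getLast?_singleton, Option.some.injEq] at hhead hlast
    exact absurd (hhead.symm.trans hlast) huv
  · obtain rfl : a = u := by simpa using hhead
    exact ⟨c, t, rfl, eq_two_of_vChain_adj (List.isChain_cons_cons.1 hchain).1 hu⟩

theorem IsSkelPath.eq_triple (hp : IsSkelPath (vChain n) u v p) (huv : u.1 + v.1 = 1) :
    ∃ c, p = [u, c, v] := by
  obtain ⟨c, t, rfl, hc⟩ := hp.exists_eq_cons_cons (by omega) (by rintro rfl; omega)
  obtain rfl | ⟨t, x, rfl⟩ := t.eq_nil_or_concat'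
  · have : c = v := by simpa using hp.2.2.1
    omega
  obtain rfl : x = v := by simpa [List.getLast?_cons] using hp.2.2.1
  obtain rfl | ⟨t, y, rfl⟩ := t.eq_nil_or_concat'
  · exact ⟨c, rfl⟩
  have hch := hp.2.2.2
  rw [List.append_assoc] at hch
  have hyx := (List.isChain_append_cons_cons (l₁ := u :: c :: t) (l₂ := [])).1 hch |>.2.1
  obtain rfl : y = c := Fin.ext ((eq_two_of_vChain_adj hyx.symm (by omega)).trans hc.symm)
  simpa using hp.1

variable [NeZero n] {Z : Finset (Fin n)}

theorem IsSkelPath.blocked_shieldedVChain_iff (hp : IsSkelPath (vChain n) u v p) :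
    Blocked (shieldedVChain n) Z p ↔ Blocked (vChain n) Z p :=
  blocked_congr fun _ _ _ h =>
    have hy := hp.two_le_of_infix h
    ⟨fun _ => ⟨fun hs => vChain_of_shieldedVChain hs (Or.inr hy), Or.inl⟩,
      fun _ => desc_shieldedVChain_iff hy⟩

theorem DSep.of_shieldedVChain (h : DSep (shieldedVChain n) u v Z) : DSep (vChain n) u v Z :=
  fun p hp => hp.blocked_shieldedVChain_iff.1 (h p (hp.mono fun _ _ => Or.inl))

theorem DSep.shieldedVChain_of_two_le (hv : 2 ≤ v.1) (h : DSep (vChain n) u v Z) :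
    DSep (shieldedVChain n) u v Z := by
  intro p hp
  by_cases hchain : p.IsChain fun a b => vChain n a b ∨ vChain n b a
  · have hp' : IsSkelPath (vChain n) u v p := ⟨hp.1, hp.2.1, hp.2.2.1, hchain⟩
    exact hp'.blocked_shieldedVChain_iff.2 (h p hp')
  obtain ⟨b, c, t, rfl, hub, hc⟩ := hp.eq_cons_cons_of_not_isChain hv hchain
  have hq := hp.vChain_of_cons_cons hub hc
  refine (hq.blocked_shieldedVChain_iff.2 (h _ hq)).cons_cons_of_cons ?_
  unfold shieldedVChain vChain
  omega

theorem dSep_vChain_iff_dSep_shieldedVChain (h : 2 ≤ u.1 ∨ 2 ≤ v.1) :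
    DSep (vChain n) u v Z ↔ DSep (shieldedVChain n) u v Z := by
  refine ⟨fun hd => ?_, DSep.of_shieldedVChain⟩
  rcases h with hu | hv
  · exact (hd.symm.shieldedVChain_of_two_le hu).symm
  · exact hd.shieldedVChain_of_two_le hv

theorem dSep_vChain_empty (huv : u.1 + v.1 = 1) : DSep (vChain n) u v ∅ := by
  intro p hp
  obtain ⟨c, rfl⟩ := hp.eq_triple huv
  have hc : c.1 = 2 := eq_two_of_vChain_adj (List.isChain_cons_cons.1 hp.2.2.2).1 (by omega)
  rw [blocked_triple_iff]
  refine Or.inr ⟨?_, fun _ _ => Finset.notMem_empty _⟩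
  unfold vChain
  omega

theorem not_dSep_shieldedVChain (huv : u.1 + v.1 = 1) (Z : Finset (Fin n)) :
    ¬ DSep (shieldedVChain n) u v Z := by
  have hp : IsSkelPath (shieldedVChain n) u v [u, v] := by
    refine ⟨by simpa using fun h : u = v => by omega, rfl, rfl, List.isChain_pair.2 ?_⟩
    unfold shieldedVChain vChain
    omega
  exact fun h => not_blocked_of_length_lt (by simp) (h _ hp)

theorem not_dSep_vChain (huv : u.1 + v.1 = 1) (hZ : Z.Nonempty) (hu : u ∉ Z) (hv : v ∉ Z) :
    ¬ DSep (vChain n) u v Z := by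
  obtain ⟨w, hw⟩ := hZ
  have hw2 : 2 ≤ w.1 :=
    two_le_of_ne huv (ne_of_mem_of_not_mem hw hu) (ne_of_mem_of_not_mem hw hv)
  obtain ⟨c, hc⟩ : ∃ c : Fin n, c.1 = 2 := ⟨⟨2, by omega⟩, rfl⟩
  have hcol : vChain n u c ∧ vChain n v c := by
    unfold vChain
    omega
  have hp : IsSkelPath (vChain n) u v [u, c, v] := by
    refine ⟨?_, rfl, rfl, ?_⟩
    · simp only [List.nodup_cons, List.mem_cons, List.not_mem_nil, or_false, not_false_eq_true,
        List.nodup_nil, and_true, Fin.ext_iff]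
      omega
    · exact List.isChain_cons_cons.2 ⟨Or.inl hcol.1, List.isChain_pair.2 (Or.inr hcol.2)⟩
  intro h
  rcases blocked_triple_iff.1 (h _ hp) with ⟨hnc, -⟩ | ⟨-, hdesc⟩
  · exact hnc hcol
  · exact hdesc w (desc_vChain_of_le hc.ge (hc ▸ hw2)) hw

theorem not_dSep_vChain_iff_dSep_shieldedVChain_iff (huv : u ≠ v) (hu : u ∉ Z) (hv : v ∉ Z) :
    ¬ (DSep (vChain n) u v Z ↔ DSep (shieldedVChain n) u v Z) ↔ u.1 + v.1 = 1 ∧ Z = ∅ := by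
  constructor
  · intro hdiff
    have huv1 : u.1 + v.1 = 1 := by
      by_contra h
      have := Fin.val_ne_of_ne huv
      exact hdiff (dSep_vChain_iff_dSep_shieldedVChain (by omega))
    refine ⟨huv1, Finset.not_nonempty_iff_eq_empty.1 fun hZ => hdiff ?_⟩
    exact iff_of_false (not_dSep_vChain huv1 hZ hu hv) (not_dSep_shieldedVChain huv1 Z)
  · rintro ⟨huv1, rfl⟩ hiff
    exact not_dSep_shieldedVChain huv1 ∅ (hiff.1 (dSep_vChain_empty huv1))

theorem dSepDist_vChain_shieldedVChain (hn : 2 ≤ n) :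
    dSepDist (vChain n) (shieldedVChain n) = 1 := by
  unfold dSepDist
  convert Set.ncard_singleton ((⟨0, by omega⟩ : Fin n), (⟨1, hn⟩ : Fin n), (∅ : Finset (Fin n)))
  ext ⟨u, v, Z⟩
  simp only [Set.mem_ofPred_eq, Set.mem_singleton_iff, Prod.mk.injEq]
  constructor
  · rintro ⟨hlt, hu, hv, hdiff⟩
    obtain ⟨huv, rfl⟩ := (not_dSep_vChain_iff_dSep_shieldedVChain_iff hlt.ne hu hv).1 hdiff
    have : u.1 < v.1 := hlt
    exact ⟨Fin.ext (show u.1 = 0 by omega), Fin.ext (show v.1 = 1 by omega), rfl⟩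
  · rintro ⟨rfl, rfl, rfl⟩
    refine ⟨by simp [Fin.lt_def], Finset.notMem_empty _, Finset.notMem_empty _, ?_⟩
    exact (not_dSep_vChain_iff_dSep_shieldedVChain_iff (by simp [Fin.ext_iff])
      (Finset.notMem_empty _) (Finset.notMem_empty _)).2 ⟨rfl, rfl⟩

end VChainPaths

theorem one_error_indistinguishable_dags {n : ℕ} [NeZero n] (hn : 4 ≤ n)
    (D₁ D' : Fin n → Fin n → Prop)
    (hD₁ : ∀ a b : Fin n, D₁ a b ↔
      ((a.1 = 0 ∧ b.1 = 2) ∨ (a.1 = 1 ∧ b.1 = 2) ∨ (2 ≤ a.1 ∧ a.1 + 1 = b.1)))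
    (hD' : ∀ a b : Fin n, D' a b ↔ (D₁ a b ∨ (a.1 = 0 ∧ b.1 = 1))) :
    dSepDist D₁ D' = 1 ∧
    DSep D₁ ⟨0, by omega⟩ ⟨1, by omega⟩ ∅ ∧
    ¬ DSep D' ⟨0, by omega⟩ ⟨1, by omega⟩ ∅ ∧
    ∀ (u v : Fin n) (Z : Finset (Fin n)), u ≠ v → u ∉ Z → v ∉ Z →
      (¬ (DSep D₁ u v Z ↔ DSep D' u v Z) ↔
        (({u, v} : Finset (Fin n)) = {⟨0, by omega⟩, ⟨1, by omega⟩} ∧ Z = ∅)) := by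
  obtain rfl : D₁ = vChain n := funext₂ fun a b => propext (hD₁ a b)
  obtain rfl : D' = shieldedVChain n := funext₂ fun a b => propext (hD' a b)
  refine ⟨dSepDist_vChain_shieldedVChain (by omega), dSep_vChain_empty rfl,
    not_dSep_shieldedVChain rfl ∅, fun u v Z huv hu hv => ?_⟩
  rw [not_dSep_vChain_iff_dSep_shieldedVChain_iff huv hu hv,
    ← Finset.coe_inj (s₁ := {u, v})]
  refine and_congr_left fun _ => ?_
  have := Fin.val_ne_of_ne huv
  simp only [Finset.coe_pair, Set.pair_eq_pair_iff, Fin.ext_iff]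
  omega
end

section
/- Let r ≥ 2 divide n, and let D be a DAG on n vertices that is a disjoint union of r complete DAGs (acyclic tournaments) each on n/r vertices. If u and v lie in the same clique, the number of sets Z ⊆ V \ {u, v} that d-separate u and v in D is at most 2^(n-2) - 2^(n - n/r); equivalently, if a DAG D''' is missing an arc between two vertices u, v of the same clique of D, then u and v are d-separated in D''' by at least 2^(n - n/r) sets Z of the form S ∪ W where S is some fixed subset of the clique's vertices d-separating u and v in D''' and W ranges over subsets of vertices outside the clique. -/
open Relation Finset

section

variable {n : ℕ} {D : Fin n → Fin n → Prop}

lemma IsDAG.wellFounded_swap (hD : IsDAG D) : WellFounded (Function.swap D) := by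
  have : IsTrans (Fin n) (Function.swap (TransGen D)) := ⟨fun _ _ _ h₁ h₂ => h₂.trans h₁⟩
  have : Std.Irrefl (Function.swap (TransGen D)) := ⟨hD⟩
  exact Subrelation.wf (r := Function.swap (TransGen D)) (fun h => TransGen.single h)
    (Finite.wellFounded_of_trans_of_irrefl _)

lemma IsDAG.ne (hD : IsDAG D) {a b : Fin n} (h : D a b) : a ≠ b := by
  rintro rfl
  exact hD a (.single h)

lemma Desc.apply_eq {α : Type*} {f : Fin n → α} (hf : ∀ a b, D a b → f a = f b) {x y : Fin n}
    (h : Desc D x y) : f x = f y := by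
  induction h with
  | refl => rfl
  | tail _ hab ih => exact ih.trans (hf _ _ hab)

open Classical in
noncomputable def properAncestors (D : Fin n → Fin n → Prop) (u v : Fin n) : Finset (Fin n) :=
  univ.filter fun x => x ≠ u ∧ x ≠ v ∧ (TransGen D x u ∨ TransGen D x v)

lemma mem_properAncestors {u v x : Fin n} :
    x ∈ properAncestors D u v ↔ x ≠ u ∧ x ≠ v ∧ (TransGen D x u ∨ TransGen D x v) := by
  simp [properAncestors]

lemma left_notMem_properAncestors {u v : Fin n} : u ∉ properAncestors D u v :=
  fun h => (mem_properAncestors.mp h).1 rfl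

lemma right_notMem_properAncestors {u v : Fin n} : v ∉ properAncestors D u v :=
  fun h => (mem_properAncestors.mp h).2.1 rfl

lemma properAncestors_apply_eq {α : Type*} {f : Fin n → α} {u v : Fin n}
    (hf : ∀ a b, D a b → f a = f b) (hfuv : f u = f v) :
    ∀ x ∈ properAncestors D u v, f x = f u := by
  intro x hx
  rcases (mem_properAncestors.mp hx).2.2 with h | h
  · exact Desc.apply_eq hf h.to_reflTransGen
  · exact (Desc.apply_eq hf h.to_reflTransGen).trans hfuv.symm

end

namespace IsSkelPath

variable {n : ℕ} [NeZero n] {D : Fin n → Fin n → Prop} {u v : Fin n} {p : List (Fin n)}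

lemma getD_zero (hp : IsSkelPath D u v p) : p.getD 0 default = u := by
  rw [List.getD_eq_getElem?_getD, ← List.head?_eq_getElem?, hp.2.1, Option.getD_some]

lemma getD_length_sub_one (hp : IsSkelPath D u v p) : p.getD (p.length - 1) default = v := by
  rw [List.getD_eq_getElem?_getD, ← List.getLast?_eq_getElem?, hp.2.2.1, Option.getD_some]

lemma adj (hp : IsSkelPath D u v p) {i : ℕ} (hi : i + 1 < p.length) :
    D (p.getD i default) (p.getD (i + 1) default) ∨
      D (p.getD (i + 1) default) (p.getD i default) := by
  rw [List.getD_eq_getElem _ _ (by omega), List.getD_eq_getElem _ _ hi]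
  exact List.isChain_iff_getElem.mp hp.2.2.2 i hi

lemma getD_injOn (hp : IsSkelPath D u v p) {i j : ℕ} (hi : i < p.length) (hj : j < p.length)
    (h : p.getD i default = p.getD j default) : i = j := by
  rw [List.getD_eq_getElem _ _ hi, List.getD_eq_getElem _ _ hj] at h
  exact (List.Nodup.getElem_inj_iff hp.1).mp h

lemma three_le_length (hp : IsSkelPath D u v p) (huv : u ≠ v) (hnuv : ¬ D u v)
    (hnvu : ¬ D v u) : 3 ≤ p.length := by
  by_contra! hL
  have hends := hp.getD_length_sub_one
  obtain hL | hL : p.length - 1 = 0 ∨ p.length = 2 := by omega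
  · rw [hL, hp.getD_zero] at hends
    exact huv hends
  · have hadj := hp.adj (i := 0) (by omega)
    rw [hp.getD_zero, show 0 + 1 = p.length - 1 by omega, hends] at hadj
    exact hadj.elim hnuv hnvu

lemma apply_getD_eq {α : Type*} {f : Fin n → α} (hf : ∀ a b, D a b → f a = f b)
    (hp : IsSkelPath D u v p) : ∀ i, i < p.length → f (p.getD i default) = f u
  | 0, _ => by rw [hp.getD_zero]
  | i + 1, hi => by
    rw [← apply_getD_eq hf hp i (by omega)]
    exact (hp.adj hi).elim (fun h => (hf _ _ h).symm) (hf _ _)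

/-- Follow arcs forward from a non-collider until reaching `u`, `v` or a collider;
well-foundedness of the DAG turns this walk into a single induction. -/
lemma transGen_of_colliders (hD : IsDAG D) (hp : IsSkelPath D u v p)
    (hcol : ∀ i, 0 < i → i + 1 < p.length → ColliderAt D p i →
      TransGen D (p.getD i default) u ∨ TransGen D (p.getD i default) v) :
    ∀ i, 0 < i → i + 1 < p.length →
      TransGen D (p.getD i default) u ∨ TransGen D (p.getD i default) v := by
  suffices ∀ x i, 0 < i → i + 1 < p.length → p.getD i default = x →
      TransGen D x u ∨ TransGen D x v from fun i hi hiL => this _ i hi hiL rfl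
  intro x
  induction x using hD.wellFounded_swap.induction with
  | _ x ih =>
  rintro i hi hiL rfl
  by_cases hc : ColliderAt D p i
  · exact hcol i hi hiL hc
  obtain ⟨j, hj, hij⟩ :
      ∃ j, (j + 1 = i ∨ j = i + 1) ∧ D (p.getD i default) (p.getD j default) := by
    have hleft := hp.adj (i := i - 1) (by omega)
    have hright := hp.adj hiL
    rw [show i - 1 + 1 = i by omega] at hleft
    unfold ColliderAt at hc
    by_cases h : D (p.getD i default) (p.getD (i - 1) default)
    · exact ⟨i - 1, by omega, h⟩
    · exact ⟨i + 1, by omega, by tauto⟩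
  by_cases hj0 : j = 0
  · rw [hj0, hp.getD_zero] at hij
    exact Or.inl (.single hij)
  by_cases hjL : j = p.length - 1
  · rw [hjL, hp.getD_length_sub_one] at hij
    exact Or.inr (.single hij)
  exact (ih _ hij j (by omega) (by omega) rfl).imp (.head hij) (.head hij)

end IsSkelPath

section

variable {n : ℕ} [NeZero n] {D : Fin n → Fin n → Prop} {u v : Fin n}

lemma not_dSep_of_adj (huv : u ≠ v) (hadj : D u v ∨ D v u) (Z : Finset (Fin n)) :
    ¬ DSep D u v Z := by
  intro h
  have hp : IsSkelPath D u v [u, v] := ⟨by simp [huv], rfl, rfl, List.isChain_pair.mpr hadj⟩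
  obtain ⟨i, hi, hi2, -⟩ := h [u, v] hp
  simp only [List.length_cons, List.length_nil] at hi2
  omega

theorem dSep_properAncestors (hD : IsDAG D) (huv : u ≠ v) (hnuv : ¬ D u v) (hnvu : ¬ D v u) :
    DSep D u v (properAncestors D u v) := by
  intro p hp
  by_contra hnb
  have hL := hp.three_le_length huv hnuv hnvu
  have hanc := hp.transGen_of_colliders hD fun i hi hiL hc => by
    by_contra hA
    refine hnb ⟨i, hi, hiL, .inr ⟨hc, fun w hw hwZ => hA ?_⟩⟩
    exact (mem_properAncestors.mp hwZ).2.2.imp (TransGen.trans_right hw) (TransGen.trans_right hw)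
  have hcoll : ∀ i, 0 < i → i + 1 < p.length → ColliderAt D p i := by
    intro i hi hiL
    by_contra hc
    refine hnb ⟨i, hi, hiL, .inl ⟨hc, mem_properAncestors.mpr ⟨fun h => ?_, fun h => ?_,
      hanc i hi hiL⟩⟩⟩
    · have := hp.getD_injOn (i := i) (j := 0) (by omega) (by omega) (by rw [h, hp.getD_zero])
      omega
    · have := hp.getD_injOn (i := i) (j := p.length - 1) (by omega) (by omega)
        (by rw [h, hp.getD_length_sub_one])
      omega
  -- the first internal vertex is a collider `u → p₁ ← p₂`, and also an ancestor of `u` or `v`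
  obtain ⟨hup, hp₂⟩ := hcoll 1 (by omega) (by omega)
  rw [Nat.sub_self, hp.getD_zero] at hup
  rcases hanc 1 (by omega) (by omega) with h | h
  · exact hD u (.head hup h)
  by_cases hL3 : p.length = 3
  · rw [show 1 + 1 = p.length - 1 by omega, hp.getD_length_sub_one] at hp₂
    exact hD v (.head hp₂ h)
  · obtain ⟨hp₁, -⟩ := hcoll 2 (by omega) (by omega)
    exact hD _ (.head hp₁ (.single hp₂))

theorem DSep.union_of_apply_ne {α : Type*} {f : Fin n → α} (hf : ∀ a b, D a b → f a = f b)
    {S W : Finset (Fin n)} (hW : ∀ x ∈ W, f x ≠ f u) (h : DSep D u v S) :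
    DSep D u v (S ∪ W) := by
  intro p hp
  obtain ⟨i, hi, hiL, hb⟩ := h p hp
  refine ⟨i, hi, hiL,
    hb.imp (And.imp_right (mem_union_left W)) (And.imp_right fun hS w hw => ?_)⟩
  rw [mem_union, not_or]
  refine ⟨hS w hw, fun hwW => hW w hwW ?_⟩
  rw [← Desc.apply_eq hf hw, hp.apply_getD_eq hf i (by omega)]

end

lemma two_pow_card_le_ncard {α : Type*} [Fintype α] [DecidableEq α] {S C : Finset α}
    (hSC : Disjoint S C) {P : Finset α → Prop} (hP : ∀ W ⊆ C, P (S ∪ W)) :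
    2 ^ #C ≤ {Z | P Z}.ncard := by
  have hinj : Set.InjOn (S ∪ ·) (C.powerset : Set (Finset α)) := by
    intro W₁ h₁ W₂ h₂ h
    rw [← union_sdiff_cancel_left (hSC.mono_right (mem_powerset.mp h₁)),
      ← union_sdiff_cancel_left (hSC.mono_right (mem_powerset.mp h₂))]
    exact congrArg (· \ S) h
  calc 2 ^ #C = #(C.powerset.image (S ∪ ·)) := by rw [card_image_of_injOn hinj, card_powerset]
    _ = (C.powerset.image (S ∪ ·) : Set (Finset α)).ncard := (Set.ncard_coe_finset _).symm
    _ ≤ _ := Set.ncard_le_ncard fun _ hZ => by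
      obtain ⟨W, hW, rfl⟩ := mem_image.mp hZ
      exact hP W (mem_powerset.mp hW)

lemma card_filter_div_eq_le {n m : ℕ} (hm : 0 < m) (q : ℕ) : #{x : Fin n | x.1 / m = q} ≤ m := by
  calc #{x : Fin n | x.1 / m = q} ≤ #(range m) := by
        refine card_le_card_of_injOn (fun x => x.1 % m) (fun x _ => mem_range.mpr ?_) ?_
        · exact Nat.mod_lt _ hm
        · intro x hx y hy h
          rw [Fin.ext_iff, ← Nat.div_add_mod x m, ← Nat.div_add_mod y m,
            (mem_filter.mp (mem_coe.mp hx)).2, (mem_filter.mp (mem_coe.mp hy)).2]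
          exact congrArg _ h
    _ = m := card_range m

theorem two_pow_le_ncard_dSep {n : ℕ} [NeZero n] {D : Fin n → Fin n → Prop} {u v : Fin n}
    {α : Type*} [DecidableEq α] {f : Fin n → α} (hD : IsDAG D) (hf : ∀ a b, D a b → f a = f b)
    (huv : u ≠ v) (hnuv : ¬ D u v) (hnvu : ¬ D v u) (hfuv : f u = f v) :
    2 ^ (n - #{x | f x = f u}) ≤ {Z | u ∉ Z ∧ v ∉ Z ∧ DSep D u v Z}.ncard := by
  rw [show n - #{x | f x = f u} = #({x | f x = f u} : Finset (Fin n))ᶜ by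
    rw [card_compl, Fintype.card_fin]]
  have hdisj : Disjoint (properAncestors D u v) ({x | f x = f u} : Finset (Fin n))ᶜ :=
    disjoint_left.mpr fun x hx hx' => by simp_all [properAncestors_apply_eq hf hfuv x hx]
  refine two_pow_card_le_ncard hdisj fun W hW => ?_
  have hWu : ∀ x ∈ W, f x ≠ f u := fun x hx => by simpa using hW hx
  refine ⟨?_, ?_, (dSep_properAncestors hD huv hnuv hnvu).union_of_apply_ne hf hWu⟩
  · rw [mem_union, not_or]
    exact ⟨left_notMem_properAncestors, fun h => hWu u h rfl⟩
  · rw [mem_union, not_or]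
    exact ⟨right_notMem_properAncestors, fun h => hWu v h hfuv.symm⟩

theorem clique_union_dseparation_counts_general {n r : ℕ} [NeZero n] (hdvd : r ∣ n)
    (D : Fin n → Fin n → Prop)
    (hcl : ∀ a b : Fin n, a ≠ b → (a.1 / (n / r) = b.1 / (n / r) ↔ (D a b ∨ D b a)))
    (u v : Fin n) (huv : u ≠ v) (hsame : u.1 / (n / r) = v.1 / (n / r)) :
    Set.ncard {Z : Finset (Fin n) | u ∉ Z ∧ v ∉ Z ∧ DSep D u v Z} ≤
      2 ^ (n - 2) - 2 ^ (n - n / r) ∧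
    ∀ D''' : Fin n → Fin n → Prop, IsDAG D''' → (∀ a b, D''' a b → D a b) →
      ¬ D''' u v → ¬ D''' v u →
      (∃ S : Finset (Fin n), (∀ x ∈ S, x.1 / (n / r) = u.1 / (n / r)) ∧
        u ∉ S ∧ v ∉ S ∧ DSep D''' u v S ∧
        ∀ W : Finset (Fin n), (∀ x ∈ W, x.1 / (n / r) ≠ u.1 / (n / r)) →
          DSep D''' u v (S ∪ W)) ∧
      2 ^ (n - n / r) ≤
        Set.ncard {Z : Finset (Fin n) | u ∉ Z ∧ v ∉ Z ∧ DSep D''' u v Z} := by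
  refine ⟨?_, fun D₃ hD₃ hsub hnuv hnvu => ?_⟩
  · have hempty : {Z : Finset (Fin n) | u ∉ Z ∧ v ∉ Z ∧ DSep D u v Z} = ∅ :=
      Set.eq_empty_of_forall_notMem fun Z hZ =>
        not_dSep_of_adj huv ((hcl u v huv).mp hsame) Z hZ.2.2
    rw [hempty, Set.ncard_empty]
    exact Nat.zero_le _
  have hr : 0 < r := Nat.pos_of_ne_zero fun h₀ => NeZero.ne n (zero_dvd_iff.mp (h₀ ▸ hdvd))
  have hm : 0 < n / r := Nat.div_pos (Nat.le_of_dvd (NeZero.pos n) hdvd) hr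
  have hf : ∀ a b, D₃ a b → a.1 / (n / r) = b.1 / (n / r) := fun a b h =>
    (hcl a b (hD₃.ne h)).mpr (.inl (hsub a b h))
  have hsep := dSep_properAncestors hD₃ huv hnuv hnvu
  refine ⟨⟨properAncestors D₃ u v, properAncestors_apply_eq hf hsame,
    left_notMem_properAncestors, right_notMem_properAncestors, hsep,
    fun W hW => hsep.union_of_apply_ne hf hW⟩, ?_⟩
  calc 2 ^ (n - n / r) ≤ 2 ^ (n - #{x : Fin n | x.1 / (n / r) = u.1 / (n / r)}) :=
        Nat.pow_le_pow_right two_pos (Nat.sub_le_sub_left (card_filter_div_eq_le hm _) n)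
    _ ≤ _ := two_pow_le_ncard_dSep hD₃ hf huv hnuv hnvu hsame

theorem clique_union_dseparation_counts {n r : ℕ} [NeZero n] (hr : 2 ≤ r) (hdvd : r ∣ n)
    (D : Fin n → Fin n → Prop) (hD : IsDAG D)
    (hcl : ∀ a b : Fin n, a ≠ b → (a.1 / (n / r) = b.1 / (n / r) ↔ (D a b ∨ D b a)))
    (u v : Fin n) (huv : u ≠ v) (hsame : u.1 / (n / r) = v.1 / (n / r)) :
    Set.ncard {Z : Finset (Fin n) | u ∉ Z ∧ v ∉ Z ∧ DSep D u v Z} ≤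
      2 ^ (n - 2) - 2 ^ (n - n / r) ∧
    ∀ D''' : Fin n → Fin n → Prop, IsDAG D''' → (∀ a b, D''' a b → D a b) →
      ¬ D''' u v → ¬ D''' v u →
      (∃ S : Finset (Fin n), (∀ x ∈ S, x.1 / (n / r) = u.1 / (n / r)) ∧
        u ∉ S ∧ v ∉ S ∧ DSep D''' u v S ∧
        ∀ W : Finset (Fin n), (∀ x ∈ W, x.1 / (n / r) ≠ u.1 / (n / r)) →
          DSep D''' u v (S ∪ W)) ∧
      2 ^ (n - n / r) ≤
        Set.ncard {Z : Finset (Fin n) | u ∉ Z ∧ v ∉ Z ∧ DSep D''' u v Z} :=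
  clique_union_dseparation_counts_general hdvd D hcl u v huv hsame
end
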